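/- arXiv:2506.10581 — 4 statements merged into one kernel-verified Lean document; each statement's English description precedes it below -/
import Mathlib

section
/- Let X = [0,5), A = [0,4], B = (4,5), and define q : X × X → [0,∞) by q(x,y) = x if x,y ∈ A and x = y; q(x,y) = 3x if x ∈ B and y ∈ A; q(x,y) = |x−y|² if x,y ∈ B; and q(x,y) = max{2x, y} + x otherwise. Then for all x, y ∈ X, q(x,y) = q(x,x) = q(y,y) implies x = y. -/
open Set

/-- The piecewise quasi-partial b-metric on `X = [0,5)` from the example. -/
noncomputable def qEx (x y : ℝ) : ℝ :=
  if x ∈ Icc (0:ℝ) 4 ∧ y ∈ Icc (0:ℝ) 4 ∧ x = y then x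
  else if x ∈ Ioo (4:ℝ) 5 ∧ y ∈ Icc (0:ℝ) 4 then 3 * x
  else if x ∈ Ioo (4:ℝ) 5 ∧ y ∈ Ioo (4:ℝ) 5 then |x - y| ^ 2
  else max (2 * x) y + x

lemma qEx_diag_A {x : ℝ} (hx : x ∈ Icc (0:ℝ) 4) : qEx x x = x := by
  simp [qEx, hx]

lemma qEx_diag_B {x : ℝ} (hx : x ∈ Ioo (4:ℝ) 5) : qEx x x = 0 := by
  have hx' : x ∉ Icc (0:ℝ) 4 := by simp [Icc]; intro; linarith [hx.1]
  simp [qEx, hx', hx]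

/-- For all `x, y ∈ [0,5)`, `qEx x y = qEx x x = qEx y y` implies `x = y`. -/
theorem qEx_separates :
    ∀ x ∈ Ico (0:ℝ) 5, ∀ y ∈ Ico (0:ℝ) 5,
      qEx x y = qEx x x → qEx x x = qEx y y → x = y := by
  intro x hx y hy h1 h2
  rcases le_or_gt x 4 with hxA | hxB <;> rcases le_or_gt y 4 with hyA | hyB
  · -- x ∈ A, y ∈ A
    have hxA' : x ∈ Icc (0:ℝ) 4 := ⟨hx.1, hxA⟩
    have hyA' : y ∈ Icc (0:ℝ) 4 := ⟨hy.1, hyA⟩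
    by_contra hne
    have hxB : x ∉ Ioo (4:ℝ) 5 := by simp [Ioo]; intro; linarith
    rw [qEx_diag_A hxA'] at h1
    have : qEx x y = max (2 * x) y + x := by simp [qEx, hne, hxB]
    rw [this] at h1
    have hmax : max (2 * x) y = 0 := by linarith
    have h2x : 2 * x ≤ 0 := le_of_le_of_eq (le_max_left _ _) hmax
    have hy0 : y ≤ 0 := le_of_le_of_eq (le_max_right _ _) hmax
    have : x = 0 := le_antisymm (by linarith) hx.1
    have : y = 0 := le_antisymm hy0 hy.1
    exact hne (by linarith)
  · -- x ∈ A, y ∈ B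
    have hxA' : x ∈ Icc (0:ℝ) 4 := ⟨hx.1, hxA⟩
    have hyA' : y ∉ Icc (0:ℝ) 4 := by simp [Icc]; intro; linarith
    have hxB' : x ∉ Ioo (4:ℝ) 5 := by simp [Ioo]; intro; linarith
    rw [qEx_diag_A hxA'] at h1
    have : qEx x y = max (2 * x) y + x := by simp [qEx, hyA', hxB']
    rw [this] at h1
    have : y ≤ max (2 * x) y := le_max_right _ _
    linarith
  · -- x ∈ B, y ∈ A
    have hxB' : x ∈ Ioo (4:ℝ) 5 := ⟨hxB, hx.2⟩
    have hxA' : x ∉ Icc (0:ℝ) 4 := by simp [Icc]; intro; linarith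
    have hyA' : y ∈ Icc (0:ℝ) 4 := ⟨hy.1, hyA⟩
    rw [qEx_diag_B hxB'] at h1
    have : qEx x y = 3 * x := by simp [qEx, hxA', hxB', hyA']
    rw [this] at h1
    linarith
  · -- x ∈ B, y ∈ B
    have hxB' : x ∈ Ioo (4:ℝ) 5 := ⟨hxB, hx.2⟩
    have hyB' : y ∈ Ioo (4:ℝ) 5 := ⟨hyB, hy.2⟩
    have hxA' : x ∉ Icc (0:ℝ) 4 := by simp [Icc]; intro; linarith
    have hyA' : y ∉ Icc (0:ℝ) 4 := by simp [Icc]; intro; linarith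
    rw [qEx_diag_B hxB'] at h1
    have : qEx x y = |x - y| ^ 2 := by simp [qEx, hxA', hyA', hxB', hyB']
    rw [this] at h1
    have : |x - y| = 0 := by
      nlinarith [abs_nonneg (x - y), sq_abs (x - y)]
    have := abs_eq_zero.mp this
    linarith
end

section
/- Uniqueness part of the main theorem: Let (X, q, s) be a quasi-partial b-metric space with s ≥ 1 and ψ a b-comparison function (so ψ(t) < t for t > 0). Let U, V : X → X and suppose x and y are common fixed points of U and V (Ux = Vx = x, Uy = Vy = y) such that max{q(Ux, Vy), q(Vy, Ux)} ≤ ψ(max{q(x,y), q(x,Ux), q(y,Vy), (q(x,Vy) + q(y,Ux) − q(x,x))/(2s)}). Then x = y. -/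
/-- Uniqueness part of the main theorem: two common fixed points `x` and `y` of
`U` and `V` satisfying the contraction condition must coincide. -/
theorem common_fixed_point_unique {X : Type*} [Nonempty X]
    (q : X → X → ℝ) (s : ℝ) (hs : 1 ≤ s)
    (hnonneg : ∀ x y, 0 ≤ q x y)
    (hsep : ∀ x y, q x y = q x x → q x x = q y y → x = y)
    (hself₁ : ∀ x y, q x x ≤ q x y)
    (hself₂ : ∀ x y, q x x ≤ q y x)
    (htri : ∀ x y z, q x y ≤ s * (q x z + q z y) - q z z)
    (ψ : ℝ → ℝ)
    (hmap : ∀ t, 0 ≤ t → 0 ≤ ψ t)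
    (hmono : ∀ a b, 0 ≤ a → a ≤ b → ψ a ≤ ψ b)
    (hsum : ∀ t, 0 ≤ t → Summable (fun i : ℕ => s ^ i * ψ^[i] t))
    (hψlt : ∀ t : ℝ, 0 < t → ψ t < t)
    (U V : X → X) (x y : X)
    (hx : U x = x) (hx' : V x = x) (hy : U y = y) (hy' : V y = y)
    (hcontr : max (q (U x) (V y)) (q (V y) (U x)) ≤
      ψ (max (max (q x y) (q x (U x)))
          (max (q y (V y)) ((q x (V y) + q y (U x) - q x x) / (2 * s))))) :
    x = y := by
  rw [hx, hy'] at hcontr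
  set M := max (q x y) (q y x) with hM
  have hM0 : 0 ≤ M := le_max_of_le_left (hnonneg x y)
  have h1 : q x x ≤ M := (hself₁ x y).trans (le_max_left _ _)
  have h2 : q y y ≤ M := (hself₁ y x).trans (le_max_right _ _)
  have h3 : (q x y + q y x - q x x) / (2 * s) ≤ M := by
    rw [div_le_iff₀ (by linarith)]
    have := hnonneg x x
    have := le_max_left (q x y) (q y x)
    have := le_max_right (q x y) (q y x)
    nlinarith
  have harg : max (max (q x y) (q x x)) (max (q y y) ((q x y + q y x - q x x) / (2 * s))) ≤ M := by
    simp only [max_le_iff]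
    exact ⟨⟨le_max_left _ _, h1⟩, h2, h3⟩
  have hargnn : 0 ≤ max (max (q x y) (q x x)) (max (q y y) ((q x y + q y x - q x x) / (2 * s))) :=
    le_max_of_le_left (le_max_of_le_left (hnonneg x y))
  have hle : M ≤ ψ M := hcontr.trans (hmono _ _ hargnn harg)
  have hMzero : M = 0 := by
    by_contra h
    have : 0 < M := lt_of_le_of_ne hM0 (Ne.symm h)
    exact absurd hle (not_le.mpr (hψlt M this))
  have hxy : q x y = 0 := le_antisymm (hMzero ▸ le_max_left _ _) (hnonneg x y)
  have hyx : q y x = 0 := le_antisymm (hMzero ▸ le_max_right _ _) (hnonneg y x)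
  have hxx : q x x = 0 := le_antisymm (hxy ▸ hself₁ x y) (hnonneg x x)
  have hyy : q y y = 0 := le_antisymm (hyx ▸ hself₁ y x) (hnonneg y y)
  exact hsep x y (by rw [hxy, hxx]) (by rw [hxx, hyy])
end

section
/- Let (X, q, s) be a quasi-partial b-metric space, s ≥ 1, ψ a b-comparison function, and let (x_n) be a sequence with q_n = q(x_n, x_{n+1}), q'_n = q(x_{n+1}, x_n) satisfying max{q'_n, q_n} ≤ ψ^n(max{q'_0, q_0}) for all n. Then for all k and all m > n ≥ k, q(x_m, x_n) ≤ ∑_{j=n}^{m−1} s^{j+1} ψ^j(max{q'_0, q_0}); in particular (x_n) is Cauchy (lim_{n,m→∞} q(x_m, x_n) = 0) since ∑_j s^{j+1} ψ^j(t) converges. -/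
open Filter

private lemma chain_bound {X : Type*}
    (q : X → X → ℝ) (s : ℝ) (hs : 1 ≤ s)
    (hnonneg : ∀ x y, 0 ≤ q x y)
    (htri : ∀ x y z, q x y ≤ s * (q x z + q z y) - q z z)
    (xs : ℕ → X) (g : ℕ → ℝ) (hg : ∀ j, 0 ≤ g j)
    (hadj : ∀ n, q (xs (n + 1)) (xs n) ≤ g n) :
    ∀ d n : ℕ, q (xs (n + d + 1)) (xs n)
      ≤ ∑ j ∈ Finset.Ico n (n + d + 1), s ^ (j - n + 1) * g j := by
  intro d
  induction d with
  | zero =>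
      intro n
      rw [show n + 0 + 1 = n + 1 from rfl, Finset.sum_Ico_eq_sum_range]
      simp only [Nat.add_sub_cancel_left]
      simp only [Finset.range_one, Finset.sum_singleton, Nat.sub_self, zero_add, pow_one,
        Nat.add_zero]
      calc q (xs (n + 1)) (xs n) ≤ g n := hadj n
        _ ≤ s * g n := le_mul_of_one_le_left (hg n) hs
  | succ d ih =>
      intro n
      have h1 : q (xs (n + (d + 1) + 1)) (xs n)
          ≤ s * (q (xs (n + (d + 1) + 1)) (xs (n + 1)) + q (xs (n + 1)) (xs n)) := by
        have := htri (xs (n + (d + 1) + 1)) (xs n) (xs (n + 1))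
        have h0 := hnonneg (xs (n + 1)) (xs (n + 1))
        linarith
      have h2 := ih (n + 1)
      have hne : n + 1 + d + 1 = n + (d + 1) + 1 := by omega
      rw [hne] at h2
      have hsnn : (0:ℝ) ≤ s := le_trans zero_le_one hs
      have h3 : q (xs (n + (d + 1) + 1)) (xs n)
          ≤ s * (∑ j ∈ Finset.Ico (n + 1) (n + (d + 1) + 1), s ^ (j - (n + 1) + 1) * g j)
            + s * g n := by
        calc q (xs (n + (d + 1) + 1)) (xs n)
            ≤ s * (q (xs (n + (d + 1) + 1)) (xs (n + 1)) + q (xs (n + 1)) (xs n)) := h1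
          _ ≤ s * ((∑ j ∈ Finset.Ico (n + 1) (n + (d + 1) + 1), s ^ (j - (n + 1) + 1) * g j)
              + g n) := by
                apply mul_le_mul_of_nonneg_left _ hsnn
                exact add_le_add h2 (hadj n)
          _ = _ := by ring
      refine h3.trans ?_
      rw [Finset.sum_eq_sum_Ico_succ_bot (by omega : n < n + (d + 1) + 1)]
      rw [Finset.mul_sum]
      have hterm : ∀ j ∈ Finset.Ico (n + 1) (n + (d + 1) + 1),
          s * (s ^ (j - (n + 1) + 1) * g j) = s ^ (j - n + 1) * g j := by
        intro j hj
        rw [Finset.mem_Ico] at hj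
        rw [← mul_assoc, ← pow_succ']
        congr 2
        omega
      rw [Finset.sum_congr rfl hterm]
      simp only [Nat.sub_self, zero_add, pow_one]
      linarith

/-- If `max (q'_n) (q_n) ≤ ψ^[n] (max q'_0 q_0)`, then
`q (x_m) (x_n) ≤ ∑_{j=n}^{m-1} s^{j+1} ψ^[j] (max q'_0 q_0)` for `m > n`,
and the sequence is Cauchy: `q (x_m) (x_n) → 0`. -/
theorem sequence_cauchy {X : Type*} [Nonempty X]
    (q : X → X → ℝ) (s : ℝ) (hs : 1 ≤ s)
    (hnonneg : ∀ x y, 0 ≤ q x y)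
    (hsep : ∀ x y, q x y = q x x → q x x = q y y → x = y)
    (hself₁ : ∀ x y, q x x ≤ q x y)
    (hself₂ : ∀ x y, q x x ≤ q y x)
    (htri : ∀ x y z, q x y ≤ s * (q x z + q z y) - q z z)
    (ψ : ℝ → ℝ)
    (hmap : ∀ t, 0 ≤ t → 0 ≤ ψ t)
    (hmono : ∀ a b, 0 ≤ a → a ≤ b → ψ a ≤ ψ b)
    (hsum : ∀ t, 0 ≤ t → Summable (fun i : ℕ => s ^ i * ψ^[i] t))
    (xs : ℕ → X)
    (hseq : ∀ n, max (q (xs (n + 1)) (xs n)) (q (xs n) (xs (n + 1)))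
      ≤ ψ^[n] (max (q (xs 1) (xs 0)) (q (xs 0) (xs 1)))) :
    (∀ m n : ℕ, n < m →
      q (xs m) (xs n) ≤ ∑ j ∈ Finset.Ico n m,
        s ^ (j + 1) * ψ^[j] (max (q (xs 1) (xs 0)) (q (xs 0) (xs 1)))) ∧
    Tendsto (fun p : ℕ × ℕ => q (xs p.1) (xs p.2)) atTop (nhds 0) := by
  set t₀ := max (q (xs 1) (xs 0)) (q (xs 0) (xs 1)) with ht₀def
  have ht₀ : 0 ≤ t₀ := le_trans (hnonneg (xs 1) (xs 0)) (le_max_left _ _)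
  set g : ℕ → ℝ := fun j => ψ^[j] t₀ with hgdef
  have hg : ∀ j, 0 ≤ g j := by
    intro j
    induction j with
    | zero => exact ht₀
    | succ j ih =>
        have : g (j + 1) = ψ (g j) := by
          simp only [hgdef, Function.iterate_succ_apply']
        rw [this]; exact hmap _ ih
  have hsnn : (0:ℝ) ≤ s := le_trans zero_le_one hs
  have hadj₁ : ∀ n, q (xs (n + 1)) (xs n) ≤ g n :=
    fun n => le_trans (le_max_left _ _) (hseq n)
  have hadj₂ : ∀ n, q (xs n) (xs (n + 1)) ≤ g n :=
    fun n => le_trans (le_max_right _ _) (hseq n)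
  -- forward chain (m > n)
  have chain₁ := chain_bound q s hs hnonneg htri xs g hg hadj₁
  -- reverse chain, using flipped metric
  have chain₂ := chain_bound (fun x y => q y x) s hs (fun x y => hnonneg y x)
    (fun x y z => by have := htri y x z; linarith) xs g hg hadj₂
  have hpow : ∀ n, ∀ j ∈ Finset.Ico n (n + (0:ℕ)) ∪ Finset.Ico n n, True := fun _ _ _ => trivial
  have key : ∀ m n : ℕ, n < m →
      q (xs m) (xs n) ≤ ∑ j ∈ Finset.Ico n m, s ^ (j + 1) * g j := by
    intro m n hnm
    have hm : m = n + (m - n - 1) + 1 := by omega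
    have := chain₁ (m - n - 1) n
    rw [← hm] at this
    refine this.trans (Finset.sum_le_sum ?_)
    intro j hj
    rw [Finset.mem_Ico] at hj
    exact mul_le_mul_of_nonneg_right
      (pow_le_pow_right₀ hs (by omega : j - n + 1 ≤ j + 1)) (hg j)
  have key₂ : ∀ m n : ℕ, m < n →
      q (xs m) (xs n) ≤ ∑ j ∈ Finset.Ico m n, s ^ (j + 1) * g j := by
    intro m n hmn
    have hn : n = m + (n - m - 1) + 1 := by omega
    have := chain₂ (n - m - 1) m
    rw [← hn] at this
    refine this.trans (Finset.sum_le_sum ?_)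
    intro j hj
    rw [Finset.mem_Ico] at hj
    exact mul_le_mul_of_nonneg_right
      (pow_le_pow_right₀ hs (by omega : j - m + 1 ≤ j + 1)) (hg j)
  set f : ℕ → ℝ := fun j => s ^ (j + 1) * g j with hfdef
  have hf0 : ∀ j, 0 ≤ f j := fun j => mul_nonneg (pow_nonneg hsnn _) (hg j)
  have hfsum : Summable f := by
    have h := (hsum t₀ ht₀).mul_left s
    refine h.congr fun j => ?_
    simp only [hfdef, hgdef, pow_succ, pow_succ']
    ring
  constructor
  · exact key
  · -- Cauchy part
    set T : ℕ → ℝ := fun n => ∑' j : ℕ, f (j + n) with hTdef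
    have hTtail : ∀ n, ∀ F : Finset ℕ, (∀ j ∈ F, n ≤ j) →
        ∑ j ∈ F, f j ≤ T n := by
      intro n F hF
      have hsum' : Summable fun j : ℕ => f (j + n) := hfsum.comp_injective (add_left_injective n)
      -- map F into shifted indices
      have : ∑ j ∈ F, f j = ∑ j ∈ F.image (fun j => j - n), f (j + n) := by
        rw [Finset.sum_image]
        · apply Finset.sum_congr rfl
          intro j hj
          congr 1
          exact (Nat.sub_add_cancel (hF j hj)).symm
        · intro a ha b hb hab
          have := hF a ha; have := hF b hb; simp only at hab; omega
      rw [this]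
      exact Summable.sum_le_tsum _ (fun j _ => hf0 _) hsum'
    have hbound : ∀ p : ℕ × ℕ, q (xs p.1) (xs p.2) ≤ T (min p.1 p.2) := by
      rintro ⟨m, n⟩
      rcases lt_trichotomy n m with h | h | h
      · simp only [min_eq_right h.le]
        exact (key m n h).trans (hTtail n _ (fun j hj => (Finset.mem_Ico.mp hj).1))
      · subst h
        simp only [min_self]
        calc q (xs n) (xs n) ≤ q (xs n) (xs (n + 1)) := hself₁ _ _
          _ ≤ g n := hadj₂ n
          _ ≤ f n := le_mul_of_one_le_left (hg n) (one_le_pow₀ hs)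
          _ ≤ T n := by
              have : f n = f (0 + n) := by norm_num
              rw [this]
              exact Summable.le_tsum (hfsum.comp_injective (add_left_injective n)) 0
                (fun j _ => hf0 _)
      · simp only [min_eq_left h.le]
        exact (key₂ m n h).trans (hTtail m _ (fun j hj => (Finset.mem_Ico.mp hj).1))
    have hT0 : Tendsto T atTop (nhds 0) := by
      have := tendsto_sum_nat_add f
      exact this.congr fun n => rfl
    have hmin : Tendsto (fun p : ℕ × ℕ => min p.1 p.2) atTop atTop := by
      rw [tendsto_atTop]
      intro b
      rw [eventually_atTop]
      exact ⟨(b, b), fun p hp => le_min hp.1 hp.2⟩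
    refine tendsto_of_tendsto_of_tendsto_of_le_of_le tendsto_const_nhds
      (hT0.comp hmin) (fun p => hnonneg _ _) hbound
end

section
/- In the metric space specialization (s = 1): Let (X, d) be a metric space, ψ : [0,∞) → [0,∞) non-decreasing with ∑_{i} ψ^i(t) < ∞ for all t, and U : X → X satisfying d(Ux, Uy) ≤ ψ(max{d(x,y), d(x,Ux), d(y,Uy), (d(x,Uy)+d(y,Ux))/2}) for all x, y in a closed ball B̄(x₀, ε) with U mapping B̄(x₀, ε) into itself, where ∑_{i=0}^{j} ψ^i(d(x₀, Ux₀)) ≤ ε for all j. If X is complete, then U has a fixed point in B̄(x₀, ε). -/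
section aux

variable (ψ : ℝ → ℝ)

lemma iter_nonneg (hmap : ∀ t, 0 ≤ t → 0 ≤ ψ t) :
    ∀ n t, 0 ≤ t → 0 ≤ ψ^[n] t := by
  intro n
  induction n with
  | zero => intro t ht; simpa using ht
  | succ n ih =>
      intro t ht
      rw [Function.iterate_succ_apply']
      exact hmap _ (ih t ht)

lemma psi_lt (hmap : ∀ t, 0 ≤ t → 0 ≤ ψ t)
    (hmono : ∀ a b, 0 ≤ a → a ≤ b → ψ a ≤ ψ b)
    (hsum : ∀ t, 0 ≤ t → Summable (fun i : ℕ => ψ^[i] t))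
    {t : ℝ} (ht : 0 < t) : ψ t < t := by
  by_contra h
  push_neg at h
  have hiter : ∀ n, t ≤ ψ^[n] t := by
    intro n
    induction n with
    | zero => simp
    | succ n ih =>
        rw [Function.iterate_succ_apply']
        calc t ≤ ψ t := h
        _ ≤ ψ (ψ^[n] t) := hmono _ _ ht.le ih
  have h0 := (hsum t ht.le).tendsto_atTop_zero
  have : t ≤ 0 := le_of_tendsto_of_tendsto' tendsto_const_nhds h0 hiter
  linarith

end aux

/-- Metric-space specialization (`s = 1`) of the fixed point theorem. -/
theorem fixed_point_metric {X : Type*} [MetricSpace X] [CompleteSpace X]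
    (ψ : ℝ → ℝ)
    (hmap : ∀ t, 0 ≤ t → 0 ≤ ψ t)
    (hmono : ∀ a b, 0 ≤ a → a ≤ b → ψ a ≤ ψ b)
    (hsum : ∀ t, 0 ≤ t → Summable (fun i : ℕ => ψ^[i] t))
    (U : X → X) (x₀ : X) (ε : ℝ) (hε : 0 < ε)
    (hmaps : ∀ x ∈ Metric.closedBall x₀ ε, U x ∈ Metric.closedBall x₀ ε)
    (hcontr : ∀ x ∈ Metric.closedBall x₀ ε, ∀ y ∈ Metric.closedBall x₀ ε,
      dist (U x) (U y) ≤ ψ (max (max (dist x y) (dist x (U x)))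
        (max (dist y (U y)) ((dist x (U y) + dist y (U x)) / 2))))
    (hball : ∀ j : ℕ, ∑ i ∈ Finset.range (j + 1), ψ^[i] (dist x₀ (U x₀)) ≤ ε) :
    ∃ x ∈ Metric.closedBall x₀ ε, U x = x := by
  have hlt : ∀ t : ℝ, 0 < t → ψ t < t := fun t ht => psi_lt ψ hmap hmono hsum ht
  have hnn : ∀ n t, 0 ≤ t → 0 ≤ ψ^[n] t := iter_nonneg ψ hmap
  set f : ℕ → X := fun n => U^[n] x₀ with hf
  have hfs : ∀ n, f (n + 1) = U (f n) := fun n => Function.iterate_succ_apply' U n x₀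
  set d₀ : ℝ := dist x₀ (U x₀) with hd₀
  -- consecutive step estimate
  have hstep : ∀ x, x ∈ Metric.closedBall x₀ ε →
      dist (U x) (U (U x)) ≤ ψ (dist x (U x)) := by
    intro x hx
    have hUx := hmaps x hx
    have h := hcontr x hx (U x) hUx
    set a := dist x (U x) with ha
    set b := dist (U x) (U (U x)) with hb
    have ha0 : 0 ≤ a := dist_nonneg
    have hb0 : 0 ≤ b := dist_nonneg
    have h4 : (dist x (U (U x)) + dist (U x) (U x)) / 2 ≤ (a + b) / 2 := by
      have := dist_triangle x (U x) (U (U x))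
      simp only [dist_self, add_zero]
      linarith
    have hba : b ≤ a := by
      by_contra hba
      push_neg at hba
      have hbpos : 0 < b := lt_of_le_of_lt ha0 hba
      have hM : max (max (dist x (U x)) (dist x (U x)))
          (max (dist (U x) (U (U x))) ((dist x (U (U x)) + dist (U x) (U x)) / 2)) ≤ b := by
        apply max_le (max_le hba.le hba.le)
        exact max_le le_rfl (h4.trans (by linarith))
      have hMnn' : (0:ℝ) ≤ max (max (dist x (U x)) (dist x (U x)))
          (max (dist (U x) (U (U x))) ((dist x (U (U x)) + dist (U x) (U x)) / 2)) :=
        le_trans ha0 (le_trans (le_max_left _ _) (le_max_left _ _))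
      have hcb : b ≤ ψ b := h.trans (hmono _ _ hMnn' hM)
      exact absurd hcb (not_le.mpr (hlt b hbpos))
    have hM : max (max (dist x (U x)) (dist x (U x)))
        (max (dist (U x) (U (U x))) ((dist x (U (U x)) + dist (U x) (U x)) / 2)) ≤ a := by
      apply max_le (max_le le_rfl le_rfl)
      exact max_le hba (h4.trans (by linarith))
    have hMnn : 0 ≤ max (max (dist x (U x)) (dist x (U x)))
        (max (dist (U x) (U (U x))) ((dist x (U (U x)) + dist (U x) (U x)) / 2)) :=
      le_trans ha0 (le_trans (le_max_left _ _) (le_max_left _ _))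
    exact h.trans (hmono _ _ hMnn hM)
  -- joint induction: in ball and distance estimate
  have key : ∀ n, f n ∈ Metric.closedBall x₀ ε ∧ dist (f n) (f (n + 1)) ≤ ψ^[n] d₀ := by
    intro n
    induction n with
    | zero =>
        constructor
        · simp [f, Metric.mem_closedBall, hε.le]
        · simp [f, hfs, d₀]
    | succ n ih =>
        obtain ⟨hmem, hd⟩ := ih
        have hmem' : f (n + 1) ∈ Metric.closedBall x₀ ε := by
          rw [hfs]; exact hmaps _ hmem
        refine ⟨hmem', ?_⟩
        have := hstep (f n) hmem
        rw [← hfs] at this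
        have h2 : dist (f (n+1)) (f (n+2)) ≤ ψ (dist (f n) (f (n+1))) := by
          rw [hfs (n+1), hfs n] at *
          exact hstep (f n) hmem
        calc dist (f (n+1)) (f (n+2)) ≤ ψ (dist (f n) (f (n+1))) := h2
        _ ≤ ψ (ψ^[n] d₀) := hmono _ _ dist_nonneg hd
        _ = ψ^[n+1] d₀ := (Function.iterate_succ_apply' ψ n d₀).symm
  have hd₀nn : 0 ≤ d₀ := dist_nonneg
  have hCauchy : CauchySeq f :=
    cauchySeq_of_dist_le_of_summable (fun n => ψ^[n] d₀)
      (fun n => (key n).2) (hsum d₀ hd₀nn)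
  obtain ⟨x, hx⟩ := cauchySeq_tendsto_of_complete hCauchy
  have hxball : x ∈ Metric.closedBall x₀ ε :=
    Metric.isClosed_closedBall.mem_of_tendsto hx
      (Filter.Eventually.of_forall fun n => (key n).1)
  refine ⟨x, hxball, ?_⟩
  -- show U x = x
  by_contra hne
  set L : ℝ := dist x (U x) with hL
  have hLpos : 0 < L := dist_pos.mpr fun h => hne h.symm
  have hψL : ψ L < L := hlt L hLpos
  -- pick n large
  have hpos : 0 < min (L / 2) ((L - ψ L) / 2) := by
    apply lt_min <;> linarith
  obtain ⟨N, hN⟩ := (Metric.tendsto_atTop.mp hx) _ hpos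
  set n := N with hnN
  have hn : dist (f n) x < min (L / 2) ((L - ψ L) / 2) := hN n le_rfl
  have hn1 : dist (f (n+1)) x < min (L / 2) ((L - ψ L) / 2) := hN (n+1) (Nat.le_succ N)
  have hm := min_le_left (L/2) ((L - ψ L)/2)
  have hm2 := min_le_right (L/2) ((L - ψ L)/2)
  have hdn : dist (f n) x < L / 2 := hn.trans_le hm
  have hdn1 : dist (f (n+1)) x < L / 2 := hn1.trans_le hm
  have hdn1' : dist (f (n+1)) x < (L - ψ L) / 2 := hn1.trans_le hm2
  have hcon := hcontr (f n) (key n).1 x hxball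
  rw [← hfs] at hcon
  set M := max (max (dist (f n) x) (dist (f n) (f (n+1))))
      (max (dist x (U x)) ((dist (f n) (U x) + dist x (f (n+1))) / 2)) with hM
  have hML : M ≤ L := by
    apply max_le (max_le _ _) (max_le le_rfl _)
    · linarith
    · calc dist (f n) (f (n+1)) ≤ dist (f n) x + dist x (f (n+1)) := dist_triangle _ _ _
      _ = dist (f n) x + dist (f (n+1)) x := by rw [dist_comm x]
      _ ≤ L := by linarith
    · have ht1 : dist (f n) (U x) ≤ dist (f n) x + L := by
        have := dist_triangle (f n) x (U x); linarith
      have ht2 : dist x (f (n+1)) = dist (f (n+1)) x := dist_comm _ _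
      calc (dist (f n) (U x) + dist x (f (n+1))) / 2
          ≤ (dist (f n) x + L + dist (f (n+1)) x) / 2 := by rw [ht2]; linarith
        _ ≤ L := by linarith
  have hMnn : 0 ≤ M := le_trans dist_nonneg (le_trans (le_max_left _ _) (le_max_left _ _))
  have hfinal : L ≤ dist x (f (n+1)) + dist (f (n+1)) (U x) := dist_triangle _ _ _
  have hψM : dist (f (n+1)) (U x) ≤ ψ L :=
    hcon.trans (hmono _ _ hMnn hML)
  rw [dist_comm x (f (n+1))] at hfinal
  linarith
end
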